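/- The Tits cone of a Coxeter system, defined as the union over w ∈ W of w(C̄) where C̄ is the closed fundamental chamber, is a convex cone. -/

import Mathlib

open scoped Classical

/-- A geometric representation (with based root system) of a Coxeter system `cs`
on a real vector space `V`, preserving a symmetric bilinear form `form`, with
simple roots `root i` satisfying the standard inner products
`B(α_i, α_j) = -cos (π / m i j)` (with value `≤ -1` when `m i j = ∞`, encoded `0`). -/
structure GeomRep {B : Type*} {W : Type*} [Group W] (M : CoxeterMatrix B)
    (cs : CoxeterSystem M W) (V : Type*) [AddCommGroup V] [Module ℝ V] where
  form : LinearMap.BilinForm ℝ V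
  form_symm : ∀ u v : V, form u v = form v u
  ρ : W →* (V ≃ₗ[ℝ] V)
  ρ_faithful : Function.Injective ρ
  root : B → V
  root_indep : LinearIndependent ℝ root
  form_preserved : ∀ (w : W) (u v : V), form (ρ w u) (ρ w v) = form u v
  form_root_finite : ∀ i j : B, M i j ≠ 0 →
    form (root i) (root j) = - Real.cos (Real.pi / (M i j : ℝ))
  form_root_infinite : ∀ i j : B, M i j = 0 → form (root i) (root j) ≤ -1
  simple_act : ∀ (i : B) (v : V),
    ρ (cs.simple i) v = v - (2 * form (root i) v) • root i

namespace GeomRep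

variable {B : Type*} {W : Type*} [Group W] {M : CoxeterMatrix B}
  {cs : CoxeterSystem M W} {V : Type*} [AddCommGroup V] [Module ℝ V]
  (G : GeomRep M cs V)

/-- The root system `Φ = W · Δ`. -/
def Roots : Set V := {v | ∃ (w : W) (i : B), v = G.ρ w (G.root i)}

/-- `v` is a nonnegative linear combination of simple roots. -/
def IsNonnegComb (v : V) : Prop :=
  ∃ c : B →₀ ℝ, (∀ i, 0 ≤ c i) ∧ v = c.sum fun i a => a • G.root i

/-- The set of positive roots `Φ⁺`. -/
def PosRoots : Set V := {v ∈ G.Roots | G.IsNonnegComb v}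

/-- The set of negative roots `Φ⁻ = -Φ⁺`. -/
def NegRoots : Set V := {v ∈ G.Roots | G.IsNonnegComb (-v)}

/-- The reflection in a root `α`, as a linear endomorphism of `V`. -/
def refl (α : V) : Module.End ℝ V :=
  LinearMap.id - (2 : ℝ) • LinearMap.smulRight (G.form α) α

/-- The (left) inversion set `N(w) = Φ⁺ ∩ w(Φ⁻)`. -/
def invSet (w : W) : Set V := {β ∈ G.PosRoots | G.ρ w⁻¹ β ∈ G.NegRoots}

/-- `β` dominates `α` : every `w` sending `β` negative sends `α` negative. -/
def Dominates (β α : V) : Prop := ∀ w : W, G.ρ w β ∈ G.NegRoots → G.ρ w α ∈ G.NegRoots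

/-- A small root: a positive root dominating no positive root other than itself. -/
def IsSmall (β : V) : Prop :=
  β ∈ G.PosRoots ∧ ∀ α ∈ G.PosRoots, G.Dominates β α → α = β

/-- The conical (nonnegative) hull of a set. -/
def cone (X : Set V) : Set V :=
  {v | ∃ c : V →₀ ℝ, (∀ x, 0 ≤ c x) ∧ ↑c.support ⊆ X ∧ v = c.sum fun x a => a • x}

/-- Low element: its inversion set is the biconvex closure of its small inversions. -/
def IsLow (Sm : Set V) (w : W) : Prop :=
  G.invSet w = cone (G.invSet w ∩ Sm) ∩ G.PosRoots

/-- The closed fundamental chamber. -/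
def chamber : Set V := {v | ∀ i : B, 0 ≤ G.form v (G.root i)}

/-- The Tits cone `T = ⋃_{w ∈ W} w(C̄)`. -/
def titsCone : Set V := ⋃ w : W, ⇑(G.ρ w) '' G.chamber

end GeomRep

/-!
If `ℓ (w * s i) > ℓ w`, then `w αᵢ` is a nonnegative combination of simple roots. Pick a right
descent `s j` of `w` and write `w = u * v` with `v` a word in `s i, s j`, lengths adding up and
`u` as short as possible. Then `u αᵢ` and `u αⱼ` are nonnegative by induction, `v` is an
alternating word whose product with `s i` is still reduced, and `v αᵢ` has the coefficients
`Uₖ(-B(αᵢ, αⱼ))` (Chebyshev polynomials of the second kind), which are nonnegative as long as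
the alternating word is shorter than `mᵢⱼ`.
Since `B(w d, αₖ) = B(d, w⁻¹ αₖ)`, a point `y = w d` with `d ∈ C̄` can fail the inequality
`B(y, αₖ) ≥ 0` only when `s k` is a left descent of `w`, and every left descent occurs in each word
for `w` (otherwise `w⁻¹ αₖ` keeps the coefficient `1` on `αₖ`), so only finitely often.

Convexity then reduces to segments from `x ∈ C̄` to `y = w d`. Follow the segment from `x` until
it leaves `C̄`, at a point `z` on the wall of such an `αₖ`. The reflection `s k` fixes `z` and maps
the rest of the segment to `[z, s k y]`, where `ℓ (s k * w) < ℓ w`, so induction on `ℓ w` applies.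
-/

namespace CoxeterSystem

variable {B : Type*} {W : Type*} [Group W] {M : CoxeterMatrix B} (cs : CoxeterSystem M W)

theorem not_isReduced_append_pair (ω : List B) (i : B) : ¬ cs.IsReduced (ω ++ [i, i]) := by
  intro h
  have hle := cs.length_wordProd_le ω
  rw [IsReduced, wordProd_append, wordProd_cons, wordProd_singleton, simple_mul_simple_self,
    mul_one] at h
  simp only [List.length_append, List.length_cons, List.length_nil] at h
  omega

theorem eq_alternatingWord_of_isReduced_append {i j : B} (hij : i ≠ j) {ω : List B}
    (hω : ∀ x ∈ ω, x = i ∨ x = j) (hred : cs.IsReduced (ω ++ [i])) :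
    ω = alternatingWord i j ω.length := by
  induction ω using List.reverseRecOn generalizing i j with
  | nil => rfl
  | append_singleton ω y ih =>
    have hy : y = j := by
      rcases hω y (by simp) with rfl | rfl
      · exact absurd (by simpa using hred) (cs.not_isReduced_append_pair ω y)
      · rfl
    subst hy
    have hprefix : cs.IsReduced (ω ++ [y]) := by
      have := hred.take (ω ++ [y]).length
      rwa [List.take_left] at this
    have := ih hij.symm (fun x hx => (hω x (by simp [hx])).symm) hprefix
    rw [List.length_append, List.length_singleton, alternatingWord_succ, ← this]
    simp

theorem exists_eq_mul_wordProd_not_isRightDescent (i j : B) (w : W) :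
    ∃ (u : W) (ω : List B), (∀ x ∈ ω, x = i ∨ x = j) ∧ w = u * cs.wordProd ω ∧
      cs.length w = cs.length u + ω.length ∧
      ¬ cs.IsRightDescent u i ∧ ¬ cs.IsRightDescent u j := by
  suffices h : ∀ (u : W) (ω : List B), (∀ x ∈ ω, x = i ∨ x = j) → w = u * cs.wordProd ω →
      cs.length w = cs.length u + ω.length → ∃ (u : W) (ω : List B), (∀ x ∈ ω, x = i ∨ x = j) ∧
        w = u * cs.wordProd ω ∧ cs.length w = cs.length u + ω.length ∧
        ¬ cs.IsRightDescent u i ∧ ¬ cs.IsRightDescent u j from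
    h w [] (by simp) (by simp) (by simp)
  intro u
  induction hn : cs.length u using Nat.strong_induction_on generalizing u with
  | _ n ih =>
    intro ω hω hw hlen
    by_cases hdesc : ∃ x, (x = i ∨ x = j) ∧ cs.IsRightDescent u x
    · obtain ⟨x, hx, hux⟩ := hdesc
      have hux' : cs.length (u * cs.simple x) + 1 = cs.length u := by
        have := cs.length_mul_simple u x
        unfold IsRightDescent at hux
        omega
      refine ih _ (by omega) (u * cs.simple x) rfl (x :: ω) ?_ ?_ ?_
      · simpa [hx] using hω
      · rw [hw, wordProd_cons, mul_assoc, simple_mul_simple_cancel_left]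
      · simp only [List.length_cons]
        omega
    · push Not at hdesc
      exact ⟨u, ω, hω, hw, by omega, hdesc i (Or.inl rfl), hdesc j (Or.inr rfl)⟩

end CoxeterSystem

namespace Polynomial.Chebyshev

theorem U_real_cos_pi_div_nonneg {m : ℕ} (hm : 2 ≤ m) {k : ℤ} (hk : -1 ≤ k)
    (hkm : k + 1 ≤ m) : 0 ≤ (U ℝ k).eval (Real.cos (Real.pi / m)) := by
  have hm0 : (0 : ℝ) < m := by positivity
  have hθ : 0 < Real.pi / m := by positivity
  have hsin : 0 < Real.sin (Real.pi / m) := by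
    refine Real.sin_pos_of_pos_of_lt_pi hθ ?_
    rw [div_lt_iff₀ hm0]
    nlinarith [Real.pi_pos, show (2 : ℝ) ≤ m by exact_mod_cast hm]
  refine nonneg_of_mul_nonneg_left ?_ hsin
  rw [U_real_cos]
  apply Real.sin_nonneg_of_nonneg_of_le_pi
  · have : (0 : ℝ) ≤ k + 1 := by exact_mod_cast (by omega : (0 : ℤ) ≤ k + 1)
    positivity
  · have : (k : ℝ) + 1 ≤ m := by exact_mod_cast hkm
    calc ((k : ℝ) + 1) * (Real.pi / m) ≤ m * (Real.pi / m) := by gcongr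
      _ = Real.pi := by field_simp

theorem U_eval_nonneg_of_one_le {x : ℝ} (hx : 1 ≤ x) {k : ℤ} (hk : -1 ≤ k) :
    0 ≤ (U ℝ k).eval x := by
  suffices h : (U ℝ (k - 1)).eval x ≤ (U ℝ k).eval x ∧ 0 ≤ (U ℝ k).eval x from h.2
  induction k, hk using Int.leInduction with
  | base => norm_num [U_neg_one, U_neg_two]
  | succ k _ ih =>
    rw [add_sub_cancel_right, U_add_one]
    simp only [eval_sub, eval_mul, eval_ofNat, eval_X]
    constructor <;> nlinarith

end Polynomial.Chebyshev

theorem segment_eq_union_segment_lineMap {𝕜 E : Type*} [Field 𝕜] [LinearOrder 𝕜]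
    [IsStrictOrderedRing 𝕜] [AddCommGroup E] [Module 𝕜 E] (x y : E) {t : 𝕜} (h₀ : 0 ≤ t)
    (h₁ : t ≤ 1) :
    segment 𝕜 x y =
      segment 𝕜 x (AffineMap.lineMap x y t) ∪ segment 𝕜 (AffineMap.lineMap x y t) y := by
  have hsplit : segment 𝕜 (0 : 𝕜) 1 = segment 𝕜 0 t ∪ segment 𝕜 t 1 := by
    rw [segment_eq_Icc zero_le_one, segment_eq_Icc h₀, segment_eq_Icc h₁,
      Set.Icc_union_Icc_eq_Icc h₀ h₁]
  have himage := congrArg (AffineMap.lineMap x y '' ·) hsplit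
  simpa only [Set.image_union, image_segment, AffineMap.lineMap_apply_zero,
    AffineMap.lineMap_apply_one] using himage

namespace GeomRep

open CoxeterSystem Polynomial Polynomial.Chebyshev

variable {B : Type*} {W : Type*} [Group W] {M : CoxeterMatrix B}
  {cs : CoxeterSystem M W} {V : Type*} [AddCommGroup V] [Module ℝ V]
  (G : GeomRep M cs V)

theorem rho_mul_apply (u w : W) (v : V) : G.ρ (u * w) v = G.ρ u (G.ρ w v) := by
  rw [map_mul]; rfl

theorem form_rho_left (w : W) (u v : V) : G.form (G.ρ w u) v = G.form u (G.ρ w⁻¹ v) := by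
  rw [← G.form_preserved w⁻¹, ← rho_mul_apply, inv_mul_cancel, map_one]; rfl

theorem form_root_self (i : B) : G.form (G.root i) (G.root i) = 1 := by
  simpa [M.diagonal i] using G.form_root_finite i i (by simp)

theorem rho_simple_root_self (i : B) : G.ρ (cs.simple i) (G.root i) = -G.root i := by
  rw [G.simple_act, G.form_root_self]
  module

theorem rho_simple_root (i j : B) :
    G.ρ (cs.simple j) (G.root i) = G.root i - (2 * G.form (G.root i) (G.root j)) • G.root j := by
  rw [G.simple_act, G.form_symm]

theorem isNonnegComb_root (i : B) : G.IsNonnegComb (G.root i) :=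
  ⟨Finsupp.single i 1, fun k => by by_cases h : i = k <;> simp [h], by simp⟩

theorem IsNonnegComb.add {u v : V} (hu : G.IsNonnegComb u) (hv : G.IsNonnegComb v) :
    G.IsNonnegComb (u + v) := by
  obtain ⟨c, hc, rfl⟩ := hu
  obtain ⟨d, hd, rfl⟩ := hv
  refine ⟨c + d, fun k => add_nonneg (hc k) (hd k), ?_⟩
  rw [Finsupp.sum_add_index' (by simp) (fun _ _ _ => add_smul _ _ _)]

theorem IsNonnegComb.smul {t : ℝ} (ht : 0 ≤ t) {v : V} (hv : G.IsNonnegComb v) :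
    G.IsNonnegComb (t • v) := by
  obtain ⟨c, hc, rfl⟩ := hv
  refine ⟨t • c, fun k => mul_nonneg ht (hc k), ?_⟩
  rw [Finsupp.smul_sum, Finsupp.sum_smul_index' (by simp)]
  simp_rw [smul_eq_mul, mul_smul]

theorem rho_alternatingWord_root (i j : B) (q : ℕ) :
    G.ρ (cs.wordProd (alternatingWord i j q)) (G.root i) =
      (U ℝ (if Even q then (q : ℤ) else q - 1)).eval (-G.form (G.root i) (G.root j)) • G.root i +
      (U ℝ (if Even q then (q : ℤ) - 1 else q)).eval (-G.form (G.root i) (G.root j)) •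
        G.root j := by
  induction q with
  | zero => simp [alternatingWord, U_neg_one]
  | succ q ih =>
    rw [alternatingWord_succ', wordProd_cons, rho_mul_apply, ih]
    by_cases hq : Even q
    · simp only [hq, if_true, Nat.even_add_one, not_true_eq_false, if_false, map_add, map_smul,
        G.rho_simple_root, G.form_root_self]
      push_cast
      rw [add_sub_cancel_right, U_add_one]
      simp only [eval_sub, eval_mul, eval_ofNat, eval_X]
      module
    · have hcomm : G.form (G.root j) (G.root i) = G.form (G.root i) (G.root j) := G.form_symm _ _
      simp only [hq, if_false, Nat.even_add_one, not_false_eq_true, if_true, map_add, map_smul,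
        G.rho_simple_root, G.form_root_self, hcomm]
      push_cast
      rw [add_sub_cancel_right, U_add_one]
      simp only [eval_sub, eval_mul, eval_ofNat, eval_X]
      module

theorem U_eval_neg_form_root_nonneg {i j : B} (hij : i ≠ j) {k : ℤ} (hk : -1 ≤ k)
    (hkm : M i j ≠ 0 → k + 1 ≤ M i j) :
    0 ≤ (U ℝ k).eval (-G.form (G.root i) (G.root j)) := by
  by_cases hm : M i j = 0
  · exact U_eval_nonneg_of_one_le (by linarith [G.form_root_infinite i j hm]) hk
  · have hm2 : 2 ≤ M i j := by have := M.off_diagonal i j hij; omega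
    rw [G.form_root_finite i j hm, neg_neg]
    exact U_real_cos_pi_div_nonneg hm2 hk (hkm hm)

theorem exists_rho_wordProd_root_eq_of_isReduced {i j : B} (hij : i ≠ j) {ω : List B}
    (hω : ∀ x ∈ ω, x = i ∨ x = j) (hred : cs.IsReduced (ω ++ [i])) :
    ∃ a b : ℝ, 0 ≤ a ∧ 0 ≤ b ∧
      G.ρ (cs.wordProd ω) (G.root i) = a • G.root i + b • G.root j := by
  have hω_alt := cs.eq_alternatingWord_of_isReduced_append hij hω hred
  have hlen : M i j ≠ 0 → ω.length + 1 ≤ M i j := by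
    intro hm
    by_contra! hlt
    refine cs.not_isReduced_alternatingWord j i (M.symmetric i j ▸ hm)
      (M.symmetric i j ▸ hlt) ?_
    rwa [alternatingWord_succ, ← hω_alt, List.concat_eq_append]
  rw [hω_alt, rho_alternatingWord_root]
  refine ⟨_, _, ?_, ?_, rfl⟩ <;> split_ifs <;>
    exact G.U_eval_neg_form_root_nonneg hij (by omega) (fun hm => by have := hlen hm; omega)

theorem isNonnegComb_rho_root_of_not_isRightDescent {w : W} {i : B}
    (h : ¬ cs.IsRightDescent w i) : G.IsNonnegComb (G.ρ w (G.root i)) := by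
  induction hn : cs.length w using Nat.strong_induction_on generalizing w i with
  | _ n ih =>
    rcases eq_or_ne w 1 with rfl | hw
    · simpa using G.isNonnegComb_root i
    obtain ⟨j, hj⟩ := cs.exists_rightDescent_of_ne_one hw
    have hij : i ≠ j := by rintro rfl; exact h hj
    obtain ⟨u, ω, hω, rfl, hlen, hui, huj⟩ := cs.exists_eq_mul_wordProd_not_isRightDescent i j w
    have hω_ne : ω ≠ [] := by rintro rfl; simp only [wordProd_nil, mul_one] at hj; exact huj hj
    have hu : cs.length u < n := by have := List.length_pos_of_ne_nil hω_ne; omega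
    have hred : cs.IsReduced (ω ++ [i]) := by
      refine le_antisymm (cs.length_wordProd_le _) ?_
      have hup := cs.not_isRightDescent_iff.1 h
      have hsub := cs.length_mul_le u (cs.wordProd (ω ++ [i]))
      rw [wordProd_append, wordProd_singleton, ← mul_assoc] at hsub
      rw [wordProd_append, wordProd_singleton, List.length_append, List.length_singleton]
      omega
    obtain ⟨a, b, ha, hb, hab⟩ := G.exists_rho_wordProd_root_eq_of_isReduced hij hω hred
    rw [rho_mul_apply, hab, map_add, map_smul, map_smul]
    exact ((ih _ hu hui rfl).smul G ha).add G ((ih _ hu huj rfl).smul G hb)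

theorem isNonnegComb_neg_rho_root_of_isRightDescent {w : W} {i : B}
    (h : cs.IsRightDescent w i) : G.IsNonnegComb (-G.ρ w (G.root i)) := by
  have := G.isNonnegComb_rho_root_of_not_isRightDescent
    (cs.isRightDescent_iff_not_isRightDescent_mul.1 h)
  rwa [rho_mul_apply, rho_simple_root_self, map_neg] at this

theorem rho_wordProd_root_sub_mem_span {k : B} {ω : List B} (hk : k ∉ ω) :
    G.ρ (cs.wordProd ω) (G.root k) - G.root k ∈ Submodule.span ℝ (G.root '' {k}ᶜ) := by
  induction ω with
  | nil => simp
  | cons j ω ih =>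
    rw [List.mem_cons, not_or] at hk
    rw [wordProd_cons, rho_mul_apply, G.simple_act, sub_right_comm]
    exact Submodule.sub_mem _ (ih hk.2)
      (Submodule.smul_mem _ _ (Submodule.subset_span ⟨j, Ne.symm hk.1, rfl⟩))

theorem not_isNonnegComb_neg_of_sub_root_mem_span {k : B} {v : V}
    (hv : v - G.root k ∈ Submodule.span ℝ (G.root '' {k}ᶜ)) : ¬ G.IsNonnegComb (-v) := by
  rintro ⟨c, hc, hcv⟩
  obtain ⟨l, hl, hlv⟩ := (Finsupp.mem_span_image_iff_linearCombination ℝ).1 hv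
  have hzero : Finsupp.linearCombination ℝ G.root (l + Finsupp.single k 1 + c) = 0 := by
    rw [map_add, map_add, hlv, Finsupp.linearCombination_single, one_smul,
      Finsupp.linearCombination_apply, ← hcv]
    abel
  have hk := congrArg (· k) (linearIndependent_iff.1 G.root_indep _ hzero)
  have hlk : l k = 0 := (Finsupp.mem_supported' ℝ l).1 hl k (by simp)
  simp only [Finsupp.add_apply, Finsupp.single_eq_same, hlk, Finsupp.coe_zero,
    Pi.zero_apply] at hk
  linarith [hc k]

theorem mem_of_isRightDescent_wordProd (G : GeomRep M cs V) {ω : List B} {k : B}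
    (h : cs.IsRightDescent (cs.wordProd ω) k) : k ∈ ω := by
  by_contra hk
  exact G.not_isNonnegComb_neg_of_sub_root_mem_span (G.rho_wordProd_root_sub_mem_span hk)
    (G.isNonnegComb_neg_rho_root_of_isRightDescent h)

theorem finite_setOf_isLeftDescent (G : GeomRep M cs V) (w : W) :
    {k | cs.IsLeftDescent w k}.Finite := by
  obtain ⟨ω, hω⟩ := cs.wordProd_surjective w⁻¹
  refine ω.finite_toSet.subset fun k hk => G.mem_of_isRightDescent_wordProd ?_
  rw [hω]
  exact cs.isRightDescent_inv_iff.2 hk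

theorem form_nonneg_of_mem_chamber {d v : V} (hd : d ∈ G.chamber) (hv : G.IsNonnegComb v) :
    0 ≤ G.form d v := by
  obtain ⟨c, hc, rfl⟩ := hv
  rw [map_finsuppSum]
  exact Finset.sum_nonneg fun i _ => by
    simpa only [map_smul, smul_eq_mul] using mul_nonneg (hc i) (hd i)

theorem isLeftDescent_of_form_neg {w : W} {d : V} (hd : d ∈ G.chamber) {k : B}
    (h : G.form (G.ρ w d) (G.root k) < 0) : cs.IsLeftDescent w k := by
  rw [← cs.isRightDescent_inv_iff]
  by_contra hk
  rw [form_rho_left] at h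
  exact h.not_ge
    (G.form_nonneg_of_mem_chamber hd (G.isNonnegComb_rho_root_of_not_isRightDescent hk))

theorem convex_chamber : Convex ℝ G.chamber := by
  intro x hx y hy a b ha hb _ k
  simpa only [map_add, map_smul, LinearMap.add_apply, LinearMap.smul_apply, smul_eq_mul] using
    add_nonneg (mul_nonneg ha (hx k)) (mul_nonneg hb (hy k))

theorem smul_mem_chamber {t : ℝ} (ht : 0 ≤ t) {v : V} (hv : v ∈ G.chamber) :
    t • v ∈ G.chamber := fun k => by
  simpa only [map_smul, LinearMap.smul_apply, smul_eq_mul] using mul_nonneg ht (hv k)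

theorem rho_mem_titsCone (w : W) {d : V} (hd : d ∈ G.chamber) : G.ρ w d ∈ G.titsCone :=
  Set.mem_iUnion.2 ⟨w, d, hd, rfl⟩

theorem chamber_subset_titsCone : G.chamber ⊆ G.titsCone := fun d hd => by
  simpa using G.rho_mem_titsCone 1 hd

theorem image_rho_titsCone_subset (w : W) : G.ρ w '' G.titsCone ⊆ G.titsCone := by
  rintro _ ⟨_, hv, rfl⟩
  obtain ⟨w', d, hd, rfl⟩ := Set.mem_iUnion.1 hv
  rw [← rho_mul_apply]
  exact G.rho_mem_titsCone _ hd

theorem image_rho_segment (w : W) (x y : V) :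
    G.ρ w '' segment ℝ x y = segment ℝ (G.ρ w x) (G.ρ w y) :=
  image_segment ℝ (G.ρ w).toLinearMap.toAffineMap x y

theorem exists_lineMap_mem_chamber_form_eq_zero {x y : V} (hx : x ∈ G.chamber)
    (hy : y ∉ G.chamber) (hfin : {k | G.form y (G.root k) < 0}.Finite) :
    ∃ t ∈ Set.Icc (0 : ℝ) 1, AffineMap.lineMap x y t ∈ G.chamber ∧
      ∃ k, G.form y (G.root k) < 0 ∧ G.form (AffineMap.lineMap x y t) (G.root k) = 0 := by
  set N := {k | G.form y (G.root k) < 0}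
  have hN : N.Nonempty := by simpa [chamber, N, Set.Nonempty] using hy
  -- `τ j` is the time at which the segment from `x` to `y` crosses the wall of `αⱼ`
  set τ : B → ℝ := fun k => G.form x (G.root k) / (G.form x (G.root k) - G.form y (G.root k))
  obtain ⟨k, hk, hmin⟩ := Set.exists_min_image N τ hfin hN
  have hform : ∀ t j, G.form (AffineMap.lineMap x y t) (G.root j)
      = (1 - t) * G.form x (G.root j) + t * G.form y (G.root j) := by
    simp [AffineMap.lineMap_apply_module]
  have hτ : ∀ j ∈ N, ∀ t, (1 - t) * G.form x (G.root j) + t * G.form y (G.root j)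
      = (G.form x (G.root j) - G.form y (G.root j)) * (τ j - t) := by
    intro j hj t
    have : G.form x (G.root j) - G.form y (G.root j) ≠ 0 := by
      have : G.form y (G.root j) < 0 := hj; linarith [hx j]
    simp only [τ]
    field_simp
    ring
  have hk' : G.form y (G.root k) < 0 := hk
  have hτk : τ k ∈ Set.Icc (0 : ℝ) 1 := by
    have := hx k
    exact ⟨div_nonneg this (by linarith), (div_le_one (by linarith)).2 (by linarith)⟩
  refine ⟨τ k, hτk, fun j => ?_, k, hk, ?_⟩
  · rw [hform]
    by_cases hj : j ∈ N
    · have : G.form y (G.root j) < 0 := hj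
      rw [hτ j hj]
      exact mul_nonneg (by linarith [hx j]) (sub_nonneg.2 (hmin j hj))
    · have : 0 ≤ G.form y (G.root j) := not_lt.1 hj
      have := hx j
      nlinarith [hτk.1, hτk.2]
  · rw [hform, hτ k hk, sub_self, mul_zero]

theorem segment_subset_titsCone (w : W) {x d : V} (hx : x ∈ G.chamber) (hd : d ∈ G.chamber) :
    segment ℝ x (G.ρ w d) ⊆ G.titsCone := by
  induction hn : cs.length w using Nat.strong_induction_on generalizing w x with
  | _ n ih =>
    by_cases hy : G.ρ w d ∈ G.chamber
    · exact (G.convex_chamber.segment_subset hx hy).trans G.chamber_subset_titsCone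
    obtain ⟨t, ht, hz, k, hyk, hzk⟩ := G.exists_lineMap_mem_chamber_form_eq_zero hx hy
      ((G.finite_setOf_isLeftDescent w).subset fun k hk => G.isLeftDescent_of_form_neg hd hk)
    set z := AffineMap.lineMap x (G.ρ w d) t
    have hfix : G.ρ (cs.simple k) z = z := by
      rw [G.simple_act, G.form_symm, hzk, mul_zero, zero_smul, sub_zero]
    have hdesc : cs.length (cs.simple k * w) < n := hn ▸ G.isLeftDescent_of_form_neg hd hyk
    rw [segment_eq_union_segment_lineMap _ _ ht.1 ht.2]
    refine Set.union_subset ((G.convex_chamber.segment_subset hx hz).trans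
      G.chamber_subset_titsCone) ?_
    calc segment ℝ z (G.ρ w d)
        = G.ρ (cs.simple k) '' segment ℝ z (G.ρ (cs.simple k * w) d) := by
          rw [image_rho_segment, hfix, ← rho_mul_apply, ← mul_assoc, simple_mul_simple_self,
            one_mul]
      _ ⊆ G.ρ (cs.simple k) '' G.titsCone := Set.image_mono (ih _ hdesc _ hz rfl)
      _ ⊆ G.titsCone := G.image_rho_titsCone_subset _

end GeomRep

/-- The Tits cone is a convex cone. -/
theorem titsCone_convexCone {B : Type*} {W : Type*} [Group W] {M : CoxeterMatrix B}
    (cs : CoxeterSystem M W) {V : Type*} [AddCommGroup V] [Module ℝ V]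
    (G : GeomRep M cs V) :
    Convex ℝ G.titsCone ∧ ∀ c : ℝ, 0 ≤ c → ∀ v ∈ G.titsCone, c • v ∈ G.titsCone := by
  refine ⟨convex_iff_segment_subset.2 fun p hp q hq => ?_, fun c hc v hv => ?_⟩
  · obtain ⟨w₁, x, hx, rfl⟩ := Set.mem_iUnion.1 hp
    obtain ⟨w₂, d, hd, rfl⟩ := Set.mem_iUnion.1 hq
    calc segment ℝ (G.ρ w₁ x) (G.ρ w₂ d)
        = G.ρ w₁ '' segment ℝ x (G.ρ (w₁⁻¹ * w₂) d) := by
          rw [G.image_rho_segment, ← G.rho_mul_apply, mul_inv_cancel_left]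
      _ ⊆ G.ρ w₁ '' G.titsCone := Set.image_mono (G.segment_subset_titsCone _ hx hd)
      _ ⊆ G.titsCone := G.image_rho_titsCone_subset w₁
  · obtain ⟨w, d, hd, rfl⟩ := Set.mem_iUnion.1 hv
    rw [← map_smul]
    exact G.rho_mem_titsCone w (G.smul_mem_chamber hc hd)
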